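/- arXiv:1804.02328 — 5 statements merged into one kernel-verified Lean document; each statement's English description precedes it below -/
import Mathlib

section
/- Let 0 < γ < 1, a ≤ 0, b > 0, c ≤ 0 with a + c + 2b = 1/3, and assume |c| ≤ b. Then for all γ ∈ (0,1), M((1−γ)|c|/b) > 0, where M(ω) = 4(1−γω)[1 − bγ³ω − aγ²] − 1. -/
/-- With M(ω) = 4(1−γω)[1 − bγ³ω − aγ²] − 1, under the stated parameter conditions and
    |c| ≤ b, one has M((1−γ)|c|/b) > 0. -/
theorem stmt_7 (γ a b c : ℝ) (hγ : 0 < γ) (hγ1 : γ < 1) (ha : a ≤ 0) (hb : 0 < b)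
    (hc : c ≤ 0) (habc : a + c + 2 * b = 1 / 3) (hcb : |c| ≤ b) :
    0 < 4 * (1 - γ * ((1 - γ) * |c| / b)) *
        (1 - b * γ ^ 3 * ((1 - γ) * |c| / b) - a * γ ^ 2) - 1 := by
  have hcabs : |c| = -c := abs_of_nonpos hc
  have hcb' : -c ≤ b := hcabs ▸ hcb
  have hd : (0:ℝ) ≤ -c := by linarith
  rw [hcabs]
  set ω : ℝ := (1 - γ) * (-c) / b with hω
  have hbω : b * ω = (1 - γ) * (-c) := by
    rw [hω]; field_simp
  have hω0 : 0 ≤ ω := by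
    apply div_nonneg _ hb.le
    nlinarith
  have hω1 : ω ≤ 1 - γ := by
    rw [hω, div_le_iff₀ hb]
    nlinarith
  have hF : 1 - γ * ω ≥ 3 / 4 := by
    nlinarith [sq_nonneg (γ - 1/2), mul_le_mul_of_nonneg_left hω1 hγ.le]
  have hS : 1 - b * γ ^ 3 * ω - a * γ ^ 2 > 2 / 3 := by
    have h1 : b * γ ^ 3 * ω = γ ^ 3 * ((1 - γ) * (-c)) := by
      rw [mul_comm b (γ ^ 3), mul_assoc, hbω]
    rw [h1]
    have hγ2 : γ ^ 2 < 1 := by nlinarith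
    have h2 : 0 ≤ (-c) * (γ ^ 2 * (1 - γ * (1 - γ))) := by
      apply mul_nonneg hd
      apply mul_nonneg (sq_nonneg γ)
      nlinarith [sq_nonneg (γ - 1/2)]
    have h3 : a * γ ^ 2 = (1/3 - c - 2*b) * γ ^ 2 := by
      rw [show a = 1/3 - c - 2*b by linarith]
    have h4 : 0 ≤ γ ^ 2 * (b + c) := mul_nonneg (sq_nonneg γ) (by linarith)
    nlinarith [h2, h3, h4, hγ2]
  nlinarith [mul_nonneg (by linarith : (0:ℝ) ≤ (1 - γ * ω) - 3/4)
      (by linarith : (0:ℝ) ≤ (1 - b * γ ^ 3 * ω - a * γ ^ 2) - 2/3), hF, hS]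
end

section
/- Let {(ξₙ, νₙ)} be a bounded sequence in H¹(ℝ) × H¹(ℝ) such that for some R > 0, sup_{y∈ℝ} ∫_{y−R}^{y+R} |νₙ(x)|² dx → 0 as n → ∞. Then ∫_ℝ ξₙ(x) νₙ²(x) dx → 0 as n → ∞. -/
/-!
On a window of length 2R around x, ν(x)² exceeds the mean of ν² over the window by at most
the total variation ∫ |(ν²)'| = 2∫ |ν ν'|, which Cauchy–Schwarz bounds by 2 (∫ ν²)^{1/2} ‖ν'‖₂.
So if every window carries mass at most ε, then ‖νₙ‖²_∞ ≤ ε/(2R) + 2√(εM), and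
|∫ ξₙ νₙ²| ≤ ‖νₙ‖_∞ ‖ξₙ‖₂ ‖νₙ‖₂ tends to 0.
-/

open MeasureTheory Filter Set Topology

theorem le_setAverage_add_integral_abs_deriv {f f' : ℝ → ℝ} {a b x : ℝ}
    (hderiv : ∀ t ∈ Ioo a b, HasDerivAt f (f' t) t) (hf : IntegrableOn f (Ioo a b))
    (hf' : IntegrableOn f' (Ioo a b)) (hx : x ∈ Ioo a b) :
    f x ≤ (⨍ t in Ioo a b, f t) + ∫ t in Ioo a b, |f' t| := by
  have hvol : volume (Ioo a b) ≠ 0 := by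
    simpa [Real.volume_Ioo] using hx.1.trans hx.2
  obtain ⟨z, hz, hfz⟩ := exists_le_setAverage hvol measure_Ioo_lt_top.ne hf
  have hsub : uIcc z x ⊆ Ioo a b := ordConnected_Ioo.uIcc_subset hz hx
  have hftc : ∫ t in z..x, f' t = f x - f z :=
    intervalIntegral.integral_eq_sub_of_hasDerivAt (fun t ht => hderiv t (hsub ht))
      (hf'.mono_set hsub).intervalIntegrable
  have hvar : ∫ t in z..x, f' t ≤ ∫ t in Ioo a b, |f' t| :=
    calc ∫ t in z..x, f' t ≤ ‖∫ t in z..x, f' t‖ := Real.le_norm_self _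
      _ ≤ ∫ t in uIoc z x, ‖f' t‖ := intervalIntegral.norm_integral_le_integral_norm_uIoc
      _ ≤ ∫ t in Ioo a b, |f' t| :=
        setIntegral_mono_set hf'.norm (Eventually.of_forall fun _ => norm_nonneg _)
          (uIoc_subset_uIcc.trans hsub).eventuallyLE
  linarith

theorem integral_abs_mul_le_sqrt_mul_sqrt {α : Type*} [MeasurableSpace α] {μ : Measure α}
    {f g : α → ℝ} (hf : MemLp f 2 μ) (hg : MemLp g 2 μ) :
    ∫ a, |f a * g a| ∂μ ≤ √(∫ a, f a ^ 2 ∂μ) * √(∫ a, g a ^ 2 ∂μ) := by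
  have hsq : ∀ r : ℝ, |r| ^ (2 : ℝ) = r ^ 2 := fun r => by
    rw [Real.rpow_two, sq_abs]
  have h := integral_mul_norm_le_Lp_mul_Lq (μ := μ) Real.HolderConjugate.two_two
    (by simpa using hf) (by simpa using hg)
  simpa only [hsq, Real.norm_eq_abs, abs_mul, Real.sqrt_eq_rpow, one_div] using h

theorem abs_integral_mul_sq_le {α : Type*} [MeasurableSpace α] {μ : Measure α}
    {ξ ν : α → ℝ} (hξ : MemLp ξ 2 μ) (hν : MemLp ν 2 μ) {S : ℝ} (hS : ∀ a, ν a ^ 2 ≤ S) :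
    |∫ a, ξ a * ν a ^ 2 ∂μ| ≤ √S * (√(∫ a, ξ a ^ 2 ∂μ) * √(∫ a, ν a ^ 2 ∂μ)) := by
  have hpt : ∀ a, ‖ξ a * ν a ^ 2‖ ≤ √S * |ξ a * ν a| := fun a => by
    rw [Real.norm_eq_abs, sq, ← mul_assoc, abs_mul, mul_comm]
    exact mul_le_mul_of_nonneg_right (Real.abs_le_sqrt (hS a)) (abs_nonneg _)
  calc |∫ a, ξ a * ν a ^ 2 ∂μ| ≤ ∫ a, √S * |ξ a * ν a| ∂μ :=
        norm_integral_le_of_norm_le ((hξ.integrable_mul hν).abs.const_mul _)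
          (Eventually.of_forall hpt)
    _ ≤ √S * (√(∫ a, ξ a ^ 2 ∂μ) * √(∫ a, ν a ^ 2 ∂μ)) := by
        rw [integral_const_mul]
        exact mul_le_mul_of_nonneg_left (integral_abs_mul_le_sqrt_mul_sqrt hξ hν) (by positivity)

theorem sq_le_of_setIntegral_Ioo_sq_le {ν : ℝ → ℝ} (hν : Differentiable ℝ ν)
    (hν2 : MemLp ν 2) (hν'2 : MemLp (deriv ν) 2) {R ε x : ℝ} (hR : 0 < R)
    (hloc : ∫ t in Ioo (x - R) (x + R), ν t ^ 2 ≤ ε) :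
    ν x ^ 2 ≤ ε / (2 * R) + 2 * √ε * √(∫ t, deriv ν t ^ 2) := by
  set I := Ioo (x - R) (x + R)
  have hνν' : Integrable (fun t => ν t * deriv ν t) := hν2.integrable_mul hν'2
  have hmean := le_setAverage_add_integral_abs_deriv (f := fun t => ν t ^ 2)
    (f' := fun t => 2 * ν t * deriv ν t) (fun t _ => by simpa using (hν t).hasDerivAt.fun_pow 2)
    hν2.integrable_sq.integrableOn
    (by simpa only [mul_assoc] using (hνν'.const_mul 2).integrableOn)
    (show x ∈ I from ⟨by linarith, by linarith⟩)
  have havg : ⨍ t in I, ν t ^ 2 ≤ ε / (2 * R) := by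
    rw [setAverage_eq, Real.volume_real_Ioo_of_le (by linarith), smul_eq_mul, inv_mul_eq_div,
      show x + R - (x - R) = 2 * R by ring]
    gcongr
  have hvar : ∫ t in I, |2 * ν t * deriv ν t| ≤ 2 * √ε * √(∫ t, deriv ν t ^ 2) :=
    calc ∫ t in I, |2 * ν t * deriv ν t| = 2 * ∫ t in I, |ν t * deriv ν t| := by
          simp only [mul_assoc, abs_mul, abs_two, integral_const_mul]
      _ ≤ 2 * (√(∫ t in I, ν t ^ 2) * √(∫ t in I, deriv ν t ^ 2)) := by
          gcongr
          exact integral_abs_mul_le_sqrt_mul_sqrt (hν2.restrict I) (hν'2.restrict I)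
      _ ≤ 2 * √ε * √(∫ t, deriv ν t ^ 2) := by
          rw [← mul_assoc]
          gcongr 2 * √?_ * √?_
          exact setIntegral_le_integral hν'2.integrable_sq
            (Eventually.of_forall fun t => sq_nonneg _)
  linarith

theorem abs_integral_mul_sq_le_of_setIntegral_Ioo_sq_le {ξ ν : ℝ → ℝ} (hξ : MemLp ξ 2)
    (hν : Differentiable ℝ ν) (hν2 : MemLp ν 2) (hν'2 : MemLp (deriv ν) 2) {M R ε : ℝ}
    (hξM : ∫ x, ξ x ^ 2 ≤ M) (hνM : ∫ x, ν x ^ 2 ≤ M) (hν'M : ∫ x, deriv ν x ^ 2 ≤ M)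
    (hR : 0 < R) (hloc : ∀ y, ∫ x in Ioo (y - R) (y + R), ν x ^ 2 ≤ ε) :
    |∫ x, ξ x * ν x ^ 2| ≤ √(ε / (2 * R) + 2 * √ε * √M) * M := by
  have hsup : ∀ x, ν x ^ 2 ≤ ε / (2 * R) + 2 * √ε * √M := fun x =>
    (sq_le_of_setIntegral_Ioo_sq_le hν hν2 hν'2 hR (hloc x)).trans (by gcongr)
  have hM : 0 ≤ M := (integral_nonneg fun x => sq_nonneg (ξ x)).trans hξM
  calc |∫ x, ξ x * ν x ^ 2| ≤ √(ε / (2 * R) + 2 * √ε * √M) * (√M * √M) := by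
        refine (abs_integral_mul_sq_le hξ hν2 hsup).trans ?_
        gcongr
    _ = √(ε / (2 * R) + 2 * √ε * √M) * M := by rw [Real.mul_self_sqrt hM]

/-- If {(ξₙ, νₙ)} is bounded in H¹(ℝ)×H¹(ℝ) and sup_y ∫_{y−R}^{y+R} νₙ² → 0 for some R > 0,
    then ∫ ξₙ νₙ² → 0. -/
theorem stmt_12 (ξ ν : ℕ → ℝ → ℝ)
    (hdξ : ∀ n, Differentiable ℝ (ξ n)) (hdν : ∀ n, Differentiable ℝ (ν n))
    (hiξ : ∀ n, Integrable (fun x => (ξ n x) ^ 2) ∧ Integrable (fun x => (deriv (ξ n) x) ^ 2))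
    (hiν : ∀ n, Integrable (fun x => (ν n x) ^ 2) ∧ Integrable (fun x => (deriv (ν n) x) ^ 2))
    (M : ℝ)
    (hbdd : ∀ n, (∫ x, ((ξ n x) ^ 2 + (deriv (ξ n) x) ^ 2
        + (ν n x) ^ 2 + (deriv (ν n) x) ^ 2)) ≤ M)
    (R : ℝ) (hR : 0 < R)
    (hvan : ∀ ε > (0 : ℝ), ∃ N : ℕ, ∀ n ≥ N, ∀ y : ℝ,
      (∫ x in Set.Ioo (y - R) (y + R), (ν n x) ^ 2) ≤ ε) :
    Tendsto (fun n => ∫ x, ξ n x * (ν n x) ^ 2) atTop (nhds 0) := by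
  have hL2 : ∀ {f : ℝ → ℝ}, Differentiable ℝ f → Integrable (fun x => f x ^ 2) → MemLp f 2 :=
    fun hf => (memLp_two_iff_integrable_sq hf.continuous.aestronglyMeasurable).2
  have hL2' : ∀ {f : ℝ → ℝ}, Integrable (fun x => deriv f x ^ 2) → MemLp (deriv f) 2 :=
    (memLp_two_iff_integrable_sq (measurable_deriv _).aestronglyMeasurable).2
  have hle_energy : ∀ {n f}, Integrable f → (∀ x, f x ≤ ξ n x ^ 2 + deriv (ξ n) x ^ 2
      + ν n x ^ 2 + deriv (ν n) x ^ 2) → ∫ x, f x ≤ M := fun {n _} hf hfle =>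
    (integral_mono hf ((((hiξ n).1.add (hiξ n).2).add (hiν n).1).add (hiν n).2) hfle).trans
      (hbdd n)
  have hbound : ∀ ε n, (∀ y, ∫ x in Ioo (y - R) (y + R), ν n x ^ 2 ≤ ε) →
      |∫ x, ξ n x * ν n x ^ 2| ≤ √(ε / (2 * R) + 2 * √ε * √M) * M := fun ε n =>
    abs_integral_mul_sq_le_of_setIntegral_Ioo_sq_le (hL2 (hdξ n) (hiξ n).1)
      (hdν n) (hL2 (hdν n) (hiν n).1) (hL2' (hiν n).2)
      (hle_energy (hiξ n).1 fun x => by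
        linarith [sq_nonneg (deriv (ξ n) x), sq_nonneg (ν n x), sq_nonneg (deriv (ν n) x)])
      (hle_energy (hiν n).1 fun x => by
        linarith [sq_nonneg (ξ n x), sq_nonneg (deriv (ξ n) x), sq_nonneg (deriv (ν n) x)])
      (hle_energy (hiν n).2 fun x => by
        linarith [sq_nonneg (ξ n x), sq_nonneg (deriv (ξ n) x), sq_nonneg (ν n x)]) hR
  have hg : Tendsto (fun ε => √(ε / (2 * R) + 2 * √ε * √M) * M) (𝓝[>] 0) (𝓝 0) := by
    simpa using ((by fun_prop : Continuous fun ε => √(ε / (2 * R) + 2 * √ε * √M) * M).tendsto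
      0).mono_left nhdsWithin_le_nhds
  rw [Metric.tendsto_atTop]
  intro δ hδ
  obtain ⟨ε, hgε, hε⟩ := ((hg.eventually (gt_mem_nhds hδ)).and self_mem_nhdsWithin).exists
  obtain ⟨N, hN⟩ := hvan ε hε
  exact ⟨N, fun n hn => by simpa [Real.dist_eq] using (hbound ε n (hN n hn)).trans_lt hgε⟩
end

section
/- Let ℓ > 0 and c > 0 with 4c − ℓ² > 0, and define K : ℝ\{0} → ℝ by K(x) = −(2ℓ/√(2π)) ∫₀^∞ y e^{−|x|y}/((c−y²)² + ℓ²y²) dy + (2√(2π)/√(4c−ℓ²)) e^{−(√(4c−ℓ²)/2)|x|} cos(ℓx/2). Then lim_{|x|→∞} x² K(x) = −2ℓ/(c²√(2π)). -/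
/-!
After the substitution `u = t y`, `t ^ (n + 1) ∫₀^∞ yⁿ e^{-ty} f(y) dy = ∫₀^∞ uⁿ e^{-u} f(u/t) du`,
and dominated convergence (with dominant `C uⁿ e^{-u}`) sends this to `n! f(0)` as `t → ∞`.
For the kernel, `f = 1 / ((c - y²)² + ℓ² y²)` is continuous and bounded because the denominator
equals `(y² + (ℓ² - 2c)/2)² + ℓ²(4c - ℓ²)/4`; the oscillating term decays exponentially.
-/

open MeasureTheory Filter Set Real Topology
open scoped Nat

theorem integrableOn_pow_mul_exp_neg_Ioi (n : ℕ) :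
    IntegrableOn (fun u : ℝ => u ^ n * exp (-u)) (Ioi 0) := by
  refine (GammaIntegral_convergent (s := n + 1) (by positivity)).congr_fun (fun u _ => ?_)
    measurableSet_Ioi
  dsimp only
  rw [add_sub_cancel_right, rpow_natCast, mul_comm]

theorem integral_pow_mul_exp_neg_Ioi (n : ℕ) :
    ∫ u in Ioi (0 : ℝ), u ^ n * exp (-u) = n ! := by
  rw [← Gamma_nat_eq_factorial, Gamma_eq_integral (by positivity)]
  refine setIntegral_congr_fun measurableSet_Ioi (fun u _ => ?_)
  rw [add_sub_cancel_right, rpow_natCast, mul_comm]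

theorem pow_succ_mul_integral_pow_mul_exp_neg_mul (f : ℝ → ℝ) (n : ℕ) {t : ℝ} (ht : 0 < t) :
    t ^ (n + 1) * ∫ y in Ioi 0, y ^ n * exp (-t * y) * f y
      = ∫ u in Ioi 0, u ^ n * exp (-u) * f (u / t) := by
  have hsubst := integral_comp_mul_left_Ioi (fun u => u ^ n * exp (-u) * f (u / t)) 0 ht
  rw [mul_zero, smul_eq_mul, eq_inv_mul_iff_mul_eq₀ ht.ne'] at hsubst
  rw [← hsubst, ← integral_const_mul, ← integral_const_mul]
  refine setIntegral_congr_fun measurableSet_Ioi (fun y _ => ?_)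
  rw [mul_div_cancel_left₀ y ht.ne', mul_pow, neg_mul]
  ring

theorem tendsto_pow_succ_mul_integral_pow_mul_exp_neg_mul {f : ℝ → ℝ} {C : ℝ} (n : ℕ)
    (hmeas : Measurable f) (hcont : ContinuousAt f 0) (hbdd : ∀ y, 0 < y → |f y| ≤ C) :
    Tendsto (fun t : ℝ => t ^ (n + 1) * ∫ y in Ioi 0, y ^ n * exp (-t * y) * f y)
      atTop (𝓝 (n ! * f 0)) := by
  have hlim : Tendsto (fun t : ℝ => ∫ u in Ioi 0, u ^ n * exp (-u) * f (u / t))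
      atTop (𝓝 (∫ u in Ioi 0, u ^ n * exp (-u) * f 0)) := by
    refine tendsto_integral_filter_of_dominated_convergence (fun u => u ^ n * exp (-u) * C)
      (Eventually.of_forall fun t => ?_) ?_ ((integrableOn_pow_mul_exp_neg_Ioi n).mul_const C) ?_
    · exact (by fun_prop : Continuous fun u : ℝ => u ^ n * exp (-u)).aestronglyMeasurable.mul
        (hmeas.comp (measurable_id.div_const t)).aestronglyMeasurable
    · filter_upwards [eventually_gt_atTop 0] with t ht
      filter_upwards [ae_restrict_mem measurableSet_Ioi] with u (hu : 0 < u)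
      rw [norm_mul, Real.norm_of_nonneg (by positivity), Real.norm_eq_abs]
      gcongr
      exact hbdd _ (div_pos hu ht)
    · filter_upwards with u
      exact tendsto_const_nhds.mul
        (hcont.tendsto.comp (tendsto_const_nhds.div_atTop tendsto_id))
  rw [integral_mul_const, integral_pow_mul_exp_neg_Ioi] at hlim
  refine hlim.congr' ?_
  filter_upwards [eventually_gt_atTop 0] with t ht
  exact (pow_succ_mul_integral_pow_mul_exp_neg_mul f n ht).symm

theorem tendsto_pow_mul_exp_neg_mul_abs_mul_cocompact {α B : ℝ} {g : ℝ → ℝ} (n : ℕ)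
    (hα : 0 < α) (hg : ∀ x, |g x| ≤ B) :
    Tendsto (fun x : ℝ => x ^ n * (exp (-α * |x|) * g x)) (cocompact ℝ) (𝓝 0) := by
  have hdecay : Tendsto (fun x : ℝ => B * (|x| ^ (n : ℝ) * exp (-α * |x|))) (cocompact ℝ)
      (𝓝 (B * 0)) :=
    ((tendsto_rpow_mul_exp_neg_mul_atTop_nhds_zero n α hα).comp
      tendsto_norm_cocompact_atTop).const_mul B
  rw [mul_zero] at hdecay
  refine squeeze_zero_norm (fun x => ?_) hdecay
  rw [rpow_natCast, Real.norm_eq_abs, abs_mul, abs_mul, abs_pow, abs_of_pos (exp_pos _)]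
  calc |x| ^ n * (exp (-α * |x|) * |g x|) ≤ |x| ^ n * (exp (-α * |x|) * B) := by
        gcongr; exact hg x
    _ = B * (|x| ^ n * exp (-α * |x|)) := by ring

theorem sq_mul_sub_sq_div_four_le (ℓ c y : ℝ) :
    ℓ ^ 2 * (4 * c - ℓ ^ 2) / 4 ≤ (c - y ^ 2) ^ 2 + ℓ ^ 2 * y ^ 2 := by
  nlinarith [sq_nonneg (y ^ 2 + (ℓ ^ 2 - 2 * c) / 2)]

theorem stmt_16_general (ℓ c : ℝ) (hℓ : 0 < ℓ) (hd : 0 < 4 * c - ℓ ^ 2) :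
    Tendsto (fun x : ℝ => x ^ 2 *
      (-(2 * ℓ / Real.sqrt (2 * Real.pi)) *
          (∫ y in Set.Ioi (0 : ℝ), y * Real.exp (-|x| * y) / ((c - y ^ 2) ^ 2 + ℓ ^ 2 * y ^ 2))
        + (2 * Real.sqrt (2 * Real.pi) / Real.sqrt (4 * c - ℓ ^ 2)) *
            Real.exp (-(Real.sqrt (4 * c - ℓ ^ 2) / 2) * |x|) * Real.cos (ℓ * x / 2)))
      (cocompact ℝ) (nhds (-(2 * ℓ) / (c ^ 2 * Real.sqrt (2 * Real.pi)))) := by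
  set Q : ℝ → ℝ := fun y => (c - y ^ 2) ^ 2 + ℓ ^ 2 * y ^ 2
  have hδ : 0 < ℓ ^ 2 * (4 * c - ℓ ^ 2) / 4 := by positivity
  have hQpos (y : ℝ) : 0 < Q y := hδ.trans_le (sq_mul_sub_sq_div_four_le ℓ c y)
  have hQcont : Continuous fun y => (Q y)⁻¹ :=
    (by fun_prop : Continuous Q).inv₀ fun y => (hQpos y).ne'
  have hQbdd (y : ℝ) : |(Q y)⁻¹| ≤ (ℓ ^ 2 * (4 * c - ℓ ^ 2) / 4)⁻¹ := by
    rw [abs_of_pos (inv_pos.mpr (hQpos y))]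
    exact inv_anti₀ hδ (sq_mul_sub_sq_div_four_le ℓ c y)
  have hwatson := (tendsto_pow_succ_mul_integral_pow_mul_exp_neg_mul 1 hQcont.measurable
    hQcont.continuousAt fun y _ => hQbdd y).comp (tendsto_norm_cocompact_atTop (E := ℝ))
  have hosc := tendsto_pow_mul_exp_neg_mul_abs_mul_cocompact 2
    (by positivity : 0 < Real.sqrt (4 * c - ℓ ^ 2) / 2) (fun x => abs_cos_le_one (ℓ * x / 2))
  convert (hwatson.const_mul (-(2 * ℓ / Real.sqrt (2 * Real.pi)))).add
    (hosc.const_mul (2 * Real.sqrt (2 * Real.pi) / Real.sqrt (4 * c - ℓ ^ 2))) using 1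
  · ext x
    simp only [Function.comp_apply, Real.norm_eq_abs, one_add_one_eq_two, sq_abs, pow_one,
      div_eq_mul_inv, Q]
    ring
  · simp only [Nat.factorial_one, Nat.cast_one, Q]
    congr 1
    ring

/-- For ℓ > 0, c > 0 with 4c − ℓ² > 0, the kernel
    K(x) = −(2ℓ/√(2π)) ∫₀^∞ y e^{−|x|y}/((c−y²)² + ℓ²y²) dy
           + (2√(2π)/√(4c−ℓ²)) e^{−(√(4c−ℓ²)/2)|x|} cos(ℓx/2)
    satisfies x²K(x) → −2ℓ/(c²√(2π)) as |x| → ∞. -/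
theorem stmt_16 (ℓ c : ℝ) (hℓ : 0 < ℓ) (hc : 0 < c) (hd : 0 < 4 * c - ℓ ^ 2) :
    Tendsto (fun x : ℝ => x ^ 2 *
      (-(2 * ℓ / Real.sqrt (2 * Real.pi)) *
          (∫ y in Set.Ioi (0 : ℝ), y * Real.exp (-|x| * y) / ((c - y ^ 2) ^ 2 + ℓ ^ 2 * y ^ 2))
        + (2 * Real.sqrt (2 * Real.pi) / Real.sqrt (4 * c - ℓ ^ 2)) *
            Real.exp (-(Real.sqrt (4 * c - ℓ ^ 2) / 2) * |x|) * Real.cos (ℓ * x / 2)))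
      (cocompact ℝ) (nhds (-(2 * ℓ) / (c ^ 2 * Real.sqrt (2 * Real.pi)))) :=
  stmt_16_general ℓ c hℓ hd
end

section
/- Let α > 0 and define K₂(x) = (√2/√π) ∫₀^∞ y e^{−|x|y}/(α² + y²) dy for x ≠ 0. Then lim_{|x|→∞} x² K₂(x) = (√2/√π)·(1/α²). -/
/-!
Substituting `y = s / t` turns `t² ∫₀^∞ y e^{-t y} / (α² + y²) dy` into
`∫₀^∞ s e^{-s} / (α² + (s/t)²) ds`. The integrand is dominated by `s e^{-s} / α²` and tends to it
as `t → ∞`, so by dominated convergence the integral tends to `Γ(2) / α² = 1 / α²`.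
-/

open MeasureTheory Filter Real Set Topology

lemma integrableOn_mul_exp_neg_Ioi : IntegrableOn (fun s : ℝ => s * exp (-s)) (Ioi 0) := by
  simpa [mul_comm, show (2 : ℝ) - 1 = 1 by norm_num] using Real.GammaIntegral_convergent (s := 2) two_pos

lemma integral_mul_exp_neg_Ioi : ∫ s in Ioi (0 : ℝ), s * exp (-s) = 1 := by
  simpa [mul_comm, show (2 : ℝ) - 1 = 1 by norm_num, Real.Gamma_two] using (Real.Gamma_eq_integral (s := 2) two_pos).symm

lemma sq_mul_integral_mul_exp_neg_mul_div_eq (α : ℝ) {t : ℝ} (ht : 0 < t) :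
    t ^ 2 * ∫ y in Ioi (0 : ℝ), y * exp (-t * y) / (α ^ 2 + y ^ 2) =
      ∫ s in Ioi (0 : ℝ), s * exp (-s) / (α ^ 2 + (s / t) ^ 2) := by
  have hsub := integral_comp_mul_left_Ioi' (fun s => s * exp (-s) / (α ^ 2 + (s / t) ^ 2)) 0 ht
  have hcomp : ∀ y : ℝ, t * y * exp (-(t * y)) / (α ^ 2 + (t * y / t) ^ 2) =
      t * (y * exp (-t * y) / (α ^ 2 + y ^ 2)) := fun y => by
    rw [mul_div_cancel_left₀ _ ht.ne', neg_mul]; ring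
  simp only [hcomp, integral_const_mul, smul_eq_mul, mul_zero] at hsub
  rw [← hsub]; ring

lemma tendsto_integral_mul_exp_neg_div_sq_add_div_sq {α : ℝ} (hα : α ≠ 0) :
    Tendsto (fun t : ℝ => ∫ s in Ioi (0 : ℝ), s * exp (-s) / (α ^ 2 + (s / t) ^ 2)) atTop
      (𝓝 (1 / α ^ 2)) := by
  have hα2 : 0 < α ^ 2 := by positivity
  rw [← integral_mul_exp_neg_Ioi, ← integral_div]
  refine tendsto_integral_filter_of_dominated_convergence (fun s => s * exp (-s) / α ^ 2)
    (Eventually.of_forall fun t => ?_) (Eventually.of_forall fun t => ?_)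
    (integrableOn_mul_exp_neg_Ioi.div_const _) (Eventually.of_forall fun s => ?_)
  · exact (Continuous.div (by fun_prop) (by fun_prop)
      fun s => by positivity).aestronglyMeasurable
  · rw [ae_restrict_iff' measurableSet_Ioi]
    refine Eventually.of_forall fun s (hs : 0 < s) => ?_
    rw [Real.norm_eq_abs, abs_of_nonneg (by positivity)]
    exact div_le_div_of_nonneg_left (by positivity) hα2 (le_add_of_nonneg_right (sq_nonneg _))
  · have hden : Tendsto (fun t : ℝ => α ^ 2 + (s / t) ^ 2) atTop (𝓝 (α ^ 2)) := by
      simpa using tendsto_const_nhds.add (((tendsto_const_nhds (x := s)).div_atTop tendsto_id).pow 2)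
    exact tendsto_const_nhds.div hden hα2.ne'

lemma tendsto_sq_mul_integral_mul_exp_neg_mul_div {α : ℝ} (hα : α ≠ 0) :
    Tendsto (fun t : ℝ => t ^ 2 * ∫ y in Ioi (0 : ℝ), y * exp (-t * y) / (α ^ 2 + y ^ 2)) atTop
      (𝓝 (1 / α ^ 2)) :=
  (tendsto_integral_mul_exp_neg_div_sq_add_div_sq hα).congr' <|
    (eventually_gt_atTop 0).mono fun _ ht => (sq_mul_integral_mul_exp_neg_mul_div_eq α ht).symm

/-- For α > 0 and K₂(x) = (√2/√π) ∫₀^∞ y e^{−|x|y}/(α² + y²) dy,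
    one has x²K₂(x) → (√2/√π)·(1/α²) as |x| → ∞. -/
theorem stmt_17 (α : ℝ) (hα : 0 < α) :
    Tendsto (fun x : ℝ => x ^ 2 *
        ((Real.sqrt 2 / Real.sqrt Real.pi) *
          ∫ y in Set.Ioi (0 : ℝ), y * Real.exp (-|x| * y) / (α ^ 2 + y ^ 2)))
      (cocompact ℝ) (nhds ((Real.sqrt 2 / Real.sqrt Real.pi) * (1 / α ^ 2))) := by
  have h := ((tendsto_sq_mul_integral_mul_exp_neg_mul_div hα.ne').comp
    (tendsto_norm_cocompact_atTop (E := ℝ))).const_mul (√2 / √π)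
  refine h.congr fun x => ?_
  simp only [Function.comp_apply, Real.norm_eq_abs, sq_abs]
  ring
end

section
/- Let S and T be closed densely defined operators on a Hilbert space H, and let A be a bounded operator on H with norm ‖A‖. Then the gap metric δ̂(T + A, T) ≤ ‖A‖, where δ̂(S,T) = ‖P_S − P_T‖ and P_S, P_T are the orthogonal projections onto the graphs of S and T in H × H. -/
noncomputable section

variable {H : Type*} [NormedAddCommGroup H] [InnerProductSpace ℝ H] [CompleteSpace H]

/-- The graph of an unbounded operator `T`, viewed as a submodule of the Hilbert space
    `H ×₂ H` (the product equipped with the ℓ² inner product). -/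
def hilbertGraph (T : H →ₗ.[ℝ] H) : Submodule ℝ (WithLp 2 (H × H)) :=
  T.graph.map (WithLp.linearEquiv 2 ℝ (H × H)).symm.toLinearMap

/-- The orthogonal projection of `H ×₂ H` onto a closed subspace, as an operator on
    `H ×₂ H`. -/
def graphProj (K : Submodule ℝ (WithLp 2 (H × H))) (hK : IsClosed (K : Set (WithLp 2 (H × H)))) :
    WithLp 2 (H × H) →L[ℝ] WithLp 2 (H × H) :=
  haveI : CompleteSpace K := hK.completeSpace_coe
  K.subtypeL.comp K.orthogonalProjectionOnto

/-- The sum `T + A` of a (possibly unbounded) operator `T` and a bounded operator `A`,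
    defined on the domain of `T`. -/
def pmapAddBounded (T : H →ₗ.[ℝ] H) (A : H →L[ℝ] H) : H →ₗ.[ℝ] H :=
  ⟨T.domain, T.toFun + (A : H →ₗ[ℝ] H).comp T.domain.subtype⟩

/-! With `P`, `Q` the projections onto `M = G(T + A)` and `N = G(T)`,
`(P - Q) x = P (x - Q x) - (Q x - P (Q x))` splits into orthogonal pieces in `M` and `Mᗮ`.
Every `z = (f, Tf + Af) ∈ M` lies within `‖A‖ ‖z‖` of `(f, Tf) ∈ N`, and vice versa. This bounds the
second piece by `‖A‖ ‖Q x‖` directly, and the first by `‖A‖ ‖x - Q x‖` because for `u ⊥ N` and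
`w ∈ N` near `P u` one has `‖P u‖² = re ⟪u, P u - w⟫`. Pythagoras for `x = Q x + (x - Q x)`
then gives `‖(P - Q) x‖ ≤ ‖A‖ ‖x‖`. -/

open scoped InnerProductSpace

namespace Submodule

variable {𝕜 E : Type*} [RCLike 𝕜] [NormedAddCommGroup E] [InnerProductSpace 𝕜 E]

theorem norm_sub_starProjection_le {K : Submodule 𝕜 E} [K.HasOrthogonalProjection] (y : E)
    {w : E} (hw : w ∈ K) : ‖y - K.starProjection y‖ ≤ ‖y - w‖ :=
  (starProjection_minimal y).trans_le <|
    ciInf_le ⟨0, Set.forall_mem_range.2 fun _ => norm_nonneg _⟩ (⟨w, hw⟩ : K)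

variable {M N : Submodule 𝕜 E} [M.HasOrthogonalProjection] {c : ℝ}

theorem norm_starProjection_apply_le_of_forall_exists_norm_sub_le (hc : 0 ≤ c)
    (hMN : ∀ z ∈ M, ∃ w ∈ N, ‖z - w‖ ≤ c * ‖z‖) {u : E} (hu : u ∈ Nᗮ) :
    ‖M.starProjection u‖ ≤ c * ‖u‖ := by
  set p := M.starProjection u
  obtain ⟨w, hwN, hw⟩ := hMN p (M.starProjection_apply_mem u)
  have hp : ‖p‖ ^ 2 = RCLike.re ⟪u, p - w⟫_𝕜 := by
    rw [inner_sub_right, (mem_orthogonal' N u).1 hu w hwN, sub_zero, ← inner_re_symm,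
      re_inner_starProjection_eq_normSq]
    rfl
  have hsq : ‖p‖ ^ 2 ≤ c * ‖u‖ * ‖p‖ :=
    calc ‖p‖ ^ 2 = RCLike.re ⟪u, p - w⟫_𝕜 := hp
      _ ≤ ‖u‖ * ‖p - w‖ := re_inner_le_norm _ _
      _ ≤ ‖u‖ * (c * ‖p‖) := by gcongr
      _ = c * ‖u‖ * ‖p‖ := by ring
  rcases (norm_nonneg p).eq_or_lt with h0 | h0
  · rw [← h0]; positivity
  · nlinarith

theorem norm_starProjection_sub_starProjection_le [N.HasOrthogonalProjection] (hc : 0 ≤ c)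
    (hMN : ∀ z ∈ M, ∃ w ∈ N, ‖z - w‖ ≤ c * ‖z‖) (hNM : ∀ z ∈ N, ∃ w ∈ M, ‖z - w‖ ≤ c * ‖z‖) :
    ‖M.starProjection - N.starProjection‖ ≤ c := by
  refine ContinuousLinearMap.opNorm_le_bound _ hc fun x => ?_
  set a := M.starProjection (x - N.starProjection x)
  set b := N.starProjection x - M.starProjection (N.starProjection x)
  have hab : (M.starProjection - N.starProjection) x = a - b := by
    simp only [a, b, sub_apply, map_sub]
    abel
  have ha : ‖a‖ ≤ c * ‖x - N.starProjection x‖ :=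
    norm_starProjection_apply_le_of_forall_exists_norm_sub_le hc hMN
      (N.sub_starProjection_mem_orthogonal x)
  have hb : ‖b‖ ≤ c * ‖N.starProjection x‖ := by
    obtain ⟨w, hwM, hw⟩ := hNM _ (N.starProjection_apply_mem x)
    exact (norm_sub_starProjection_le _ hwM).trans hw
  have hab_orth : ⟪a, b⟫_𝕜 = 0 :=
    (M.mem_orthogonal b).1 (M.sub_starProjection_mem_orthogonal _) a (M.starProjection_apply_mem _)
  have hx : ‖x‖ ^ 2 = ‖N.starProjection x‖ ^ 2 + ‖x - N.starProjection x‖ ^ 2 := by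
    rw [N.norm_sq_eq_add_norm_sq_starProjection x, N.starProjection_orthogonal_val]
  rw [hab]
  refine le_of_sq_le_sq ?_ (by positivity)
  calc ‖a - b‖ ^ 2 = ‖a‖ ^ 2 + ‖b‖ ^ 2 := by rw [@norm_sub_sq 𝕜, hab_orth, map_zero]; ring
    _ ≤ (c * ‖x - N.starProjection x‖) ^ 2 + (c * ‖N.starProjection x‖) ^ 2 := by gcongr
    _ = (c * ‖x‖) ^ 2 := by rw [mul_pow, mul_pow, mul_pow, hx]; ring

end Submodule

omit [CompleteSpace H] in
theorem exists_mem_hilbertGraph_norm_sub_le {S T : H →ₗ.[ℝ] H} (hST : S.domain ≤ T.domain)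
    {c : ℝ} (hc : 0 ≤ c) (h : ∀ f : S.domain, ‖S f - T ⟨f, hST f.2⟩‖ ≤ c * ‖(f : H)‖)
    {z : WithLp 2 (H × H)} (hz : z ∈ hilbertGraph S) :
    ∃ w ∈ hilbertGraph T, ‖z - w‖ ≤ c * ‖z‖ := by
  obtain ⟨⟨x, y⟩, hzS, rfl⟩ := hz
  obtain ⟨f, rfl, rfl⟩ := S.mem_graph_iff.1 hzS
  refine ⟨WithLp.toLp 2 ((f : H), T ⟨f, hST f.2⟩), ⟨_, T.mem_graph ⟨f, hST f.2⟩, rfl⟩, ?_⟩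
  have hdiff : WithLp.toLp 2 ((f : H), S f) - WithLp.toLp 2 ((f : H), T ⟨f, hST f.2⟩) =
      WithLp.toLp 2 (0, S f - T ⟨f, hST f.2⟩) := by
    rw [← WithLp.toLp_sub, Prod.mk_sub_mk, sub_self]
  change ‖WithLp.toLp 2 ((f : H), S f) - _‖ ≤ c * ‖WithLp.toLp 2 ((f : H), S f)‖
  calc _ = ‖S f - T ⟨f, hST f.2⟩‖ := by rw [hdiff, WithLp.norm_toLp_snd]
    _ ≤ c * ‖(f : H)‖ := h f
    _ ≤ c * ‖WithLp.toLp 2 ((f : H), S f)‖ := by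
        gcongr
        exact WithLp.norm_fst_le H (WithLp.toLp 2 ((f : H), S f))

theorem stmt_18_general (T : H →ₗ.[ℝ] H) (A : H →L[ℝ] H)
    (hTclosed : IsClosed ((hilbertGraph T : Submodule ℝ (WithLp 2 (H × H))) :
      Set (WithLp 2 (H × H))))
    (hTAclosed : IsClosed ((hilbertGraph (pmapAddBounded T A) :
      Submodule ℝ (WithLp 2 (H × H))) : Set (WithLp 2 (H × H)))) :
    ‖graphProj (hilbertGraph (pmapAddBounded T A)) hTAclosed
        - graphProj (hilbertGraph T) hTclosed‖ ≤ ‖A‖ := by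
  have := hTclosed.completeSpace_coe
  have := hTAclosed.completeSpace_coe
  refine Submodule.norm_starProjection_sub_starProjection_le (norm_nonneg A)
    (fun z hz => exists_mem_hilbertGraph_norm_sub_le (S := pmapAddBounded T A) (T := T) le_rfl
      (norm_nonneg A) (fun f => ?_) hz)
    (fun z hz => exists_mem_hilbertGraph_norm_sub_le (S := T) (T := pmapAddBounded T A) le_rfl
      (norm_nonneg A) (fun f => ?_) hz)
  · change ‖T f + A f - T f‖ ≤ _
    rw [add_sub_cancel_left]
    exact A.le_opNorm f
  · change ‖T f - (T f + A f)‖ ≤ _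
    rw [sub_add_cancel_left, norm_neg]
    exact A.le_opNorm f

/-- Let S, T be closed densely defined operators on a Hilbert space H and A a bounded
    operator on H.  Then the gap metric satisfies δ̂(T + A, T) ≤ ‖A‖, where δ̂ is the norm
    of the difference of the orthogonal projections onto the graphs in H ×₂ H. -/
theorem stmt_18 (S T : H →ₗ.[ℝ] H) (A : H →L[ℝ] H)
    (hSdense : Dense (S.domain : Set H)) (hTdense : Dense (T.domain : Set H))
    (hSclosed : IsClosed ((hilbertGraph S : Submodule ℝ (WithLp 2 (H × H))) :
      Set (WithLp 2 (H × H))))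
    (hTclosed : IsClosed ((hilbertGraph T : Submodule ℝ (WithLp 2 (H × H))) :
      Set (WithLp 2 (H × H))))
    (hTAclosed : IsClosed ((hilbertGraph (pmapAddBounded T A) :
      Submodule ℝ (WithLp 2 (H × H))) : Set (WithLp 2 (H × H)))) :
    ‖graphProj (hilbertGraph (pmapAddBounded T A)) hTAclosed
        - graphProj (hilbertGraph T) hTclosed‖ ≤ ‖A‖ :=
  stmt_18_general T A hTclosed hTAclosed
end
end
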